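/- arXiv:1902.03973 — 4 statements merged into one kernel-verified Lean document; each statement's English description precedes it below -/
import Mathlib

section
/- Let ε, μ > 0, δ := √(μ/3), T > 0, and let ζ, q : [0,T] × [0,∞) → ℝ be of class C³ (all partial derivatives up to order three exist and are continuous) with h := 1 + εζ > 0 everywhere, satisfying the momentum equation of the dimensionless Abbott–Boussinesq system: ∂_t q − (μ/3) ∂_x² ∂_t q + ∂_x 𝔣(ζ, q) = 0 on [0,T] × [0,∞), where 𝔣(ζ,q) = (1/(2ε))(h² − 1) + ε q²/h. Fix t ∈ [0,T], and suppose that x ↦ ∂_t q(t,x) is square-integrable on (0,∞), and that w : [0,∞) → ℝ is a C² function, square-integrable on (0,∞), with w − (μ/3) w″ = −∂_x 𝔣(ζ,q)(t,·) on [0,∞) and w(0) = 0. Then ∂_t q(t,x) = w(x) + ∂_t q(t,0) · exp(−x/δ) for all x ≥ 0. -/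
/-!
At a fixed time, `u := ∂ₜq(t, ·) - w` satisfies `u - (μ/3) u'' = 0` on the half-line, i.e.
`u'' = k² u` with `k = 1/δ`. Then `u' + k u` and `u' - k u` are multiples of `exp (k x)` and
`exp (-k x)`, so `u` is a combination of the two modes; square integrability of `u` excludes the
growing one, hence `u x = u 0 * exp (-x/δ)`, and `u 0 = ∂ₜq(t, 0)` because `w 0 = 0`.
-/

open Set MeasureTheory

/-- `f` is square-integrable on `(0, ∞)` (w.r.t. Lebesgue measure). -/
def SqInt (f : ℝ → ℝ) : Prop := IntegrableOn (fun x => f x ^ 2) (Ioi 0)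

/-- `u` is of class C² on `[0, ∞)`, with first derivative `u'` and second
derivative `u''` (one-sided at the endpoint, `u''` continuous). -/
def C2Half (u u' u'' : ℝ → ℝ) : Prop :=
  (∀ x ∈ Ici (0 : ℝ), HasDerivWithinAt u (u' x) (Ici 0) x) ∧
  (∀ x ∈ Ici (0 : ℝ), HasDerivWithinAt u' (u'' x) (Ici 0) x) ∧
  ContinuousOn u'' (Ici 0)

open Filter Real

theorem contDiff_deriv_fst {E F : Type*} [NormedAddCommGroup E] [NormedSpace ℝ E]
    [NormedAddCommGroup F] [NormedSpace ℝ F] {f : ℝ → E → F} {n : WithTop ℕ∞}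
    (hf : ContDiff ℝ (n + 1) (Function.uncurry f)) (t : ℝ) :
    ContDiff ℝ n (fun x => deriv (fun s => f s x) t) := by
  have hdiff : Differentiable ℝ (Function.uncurry f) :=
    hf.differentiable (by simp)
  have heq : (fun x => deriv (fun s => f s x) t)
      = fun x => fderiv ℝ (Function.uncurry f) (t, x) (1, 0) := funext fun x => by
    have h := (hdiff (t, x)).hasFDerivAt.comp_hasDerivAt t
      ((hasDerivAt_id t).prodMk (hasDerivAt_const t x))
    exact h.deriv
  rw [heq]
  exact ((hf.fderiv_right le_rfl).comp (contDiff_const.prodMk contDiff_id)).clm_apply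
    contDiff_const

theorem eq_mul_exp_of_hasDerivWithinAt_Ici {f : ℝ → ℝ} {c : ℝ}
    (hf : ∀ x ∈ Ici (0 : ℝ), HasDerivWithinAt f (c * f x) (Ici 0) x) :
    ∀ x ∈ Ici (0 : ℝ), f x = f 0 * exp (c * x) := by
  set g : ℝ → ℝ := fun x => f x * exp (-c * x)
  have hg : ∀ x ∈ Ici (0 : ℝ), HasDerivWithinAt g 0 (Ici 0) x := fun x hx => by
    have he : HasDerivAt (fun y => exp (-c * y)) (exp (-c * x) * -c) x := by
      simpa using ((hasDerivAt_id x).const_mul (-c)).exp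
    exact ((hf x hx).mul he.hasDerivWithinAt).congr_deriv (by ring)
  intro x hx
  have hconst := constant_of_has_deriv_right_zero (f := g) (a := 0) (b := x)
    (fun y hy => (hg y hy.1).continuousWithinAt.mono Icc_subset_Ici_self)
    (fun y hy => (hg y hy.1).mono (Ici_subset_Ici.mpr hy.1)) x ⟨hx, le_rfl⟩
  have hexp : exp (-c * x) * exp (c * x) = 1 := by rw [← exp_add]; simp
  calc f x = g x * exp (c * x) := by rw [mul_assoc, hexp, mul_one]
    _ = f 0 * exp (c * x) := by rw [hconst]; simp [g]

theorem eq_zero_of_memLp_mul_exp {a k : ℝ} (hk : 0 ≤ k)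
    (h : MemLp (fun x => a * exp (k * x)) 2 (volume.restrict (Ioi 0))) : a = 0 := by
  have hconst : MemLp (fun _ : ℝ => a) 2 (volume.restrict (Ioi 0)) := by
    refine h.of_le aestronglyMeasurable_const ((ae_restrict_iff' measurableSet_Ioi).2
      (Eventually.of_forall fun x hx => ?_))
    rw [norm_mul, norm_of_nonneg (exp_pos _).le]
    exact le_mul_of_one_le_right (norm_nonneg a) (one_le_exp (mul_nonneg hk (le_of_lt hx)))
  rcases (memLp_const_iff two_ne_zero ENNReal.ofNat_ne_top).1 hconst with ha | hfin
  · exact ha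
  · simp [Real.volume_Ioi] at hfin

theorem memLp_exp_neg_mul {k : ℝ} (hk : 0 < k) :
    MemLp (fun x => exp (-k * x)) 2 (volume.restrict (Ioi 0)) := by
  have hm : AEStronglyMeasurable (fun x => exp (-k * x)) (volume.restrict (Ioi 0)) :=
    (by fun_prop : Continuous fun x => exp (-k * x)).aestronglyMeasurable
  refine (memLp_two_iff_integrable_sq hm).2
    ((integrableOn_exp_mul_Ioi (a := -(2 * k)) (by linarith) 0).congr_fun (fun x _ => ?_)
      measurableSet_Ioi)
  rw [← exp_nat_mul]; ring_nf

theorem SqInt.memLp {f : ℝ → ℝ} (hf : SqInt f) (hcont : ContinuousOn f (Ioi 0)) :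
    MemLp f 2 (volume.restrict (Ioi 0)) :=
  (memLp_two_iff_integrable_sq (hcont.aestronglyMeasurable measurableSet_Ioi)).2 hf

namespace C2Half

variable {u u' u'' v v' v'' : ℝ → ℝ}

theorem continuousOn (hu : C2Half u u' u'') : ContinuousOn u (Ici 0) :=
  fun x hx => (hu.1 x hx).continuousWithinAt

theorem sub (hu : C2Half u u' u'') (hv : C2Half v v' v'') :
    C2Half (u - v) (u' - v') (u'' - v'') :=
  ⟨fun x hx => (hu.1 x hx).sub (hv.1 x hx), fun x hx => (hu.2.1 x hx).sub (hv.2.1 x hx),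
    hu.2.2.sub hv.2.2⟩

theorem eq_mul_exp_neg_of_memLp {k : ℝ} (hk : 0 < k) (hu : C2Half u u' u'')
    (hode : ∀ x ∈ Ici (0 : ℝ), u'' x = k ^ 2 * u x)
    (hL2 : MemLp u 2 (volume.restrict (Ioi 0))) :
    ∀ x ∈ Ici (0 : ℝ), u x = u 0 * exp (-k * x) := by
  have hp := eq_mul_exp_of_hasDerivWithinAt_Ici (f := fun x => u' x + k * u x) (c := k)
    fun x hx => ((hu.2.1 x hx).add ((hu.1 x hx).const_mul k)).congr_deriv
      (by rw [hode x hx]; ring)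
  have hm := eq_mul_exp_of_hasDerivWithinAt_Ici (f := fun x => u' x - k * u x) (c := -k)
    fun x hx => ((hu.2.1 x hx).sub ((hu.1 x hx).const_mul k)).congr_deriv
      (by rw [hode x hx]; ring)
  set p₀ := u' 0 + k * u 0
  set m₀ := u' 0 - k * u 0
  have hsplit : ∀ x ∈ Ici (0 : ℝ), p₀ * exp (k * x) = 2 * k * u x + m₀ * exp (-k * x) :=
    fun x hx => by linarith [hp x hx, hm x hx]
  have hp₀ : p₀ = 0 := by
    refine eq_zero_of_memLp_mul_exp hk.le
      (((hL2.const_mul (2 * k)).add ((memLp_exp_neg_mul hk).const_mul m₀)).ae_eq ?_)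
    refine (ae_restrict_iff' measurableSet_Ioi).2 (Eventually.of_forall fun x hx => ?_)
    exact (hsplit x (Ioi_subset_Ici_self hx)).symm
  have hu_eq : ∀ x ∈ Ici (0 : ℝ), u x = -m₀ / (2 * k) * exp (-k * x) := fun x hx => by
    have := hsplit x hx
    rw [hp₀, zero_mul] at this
    rw [div_mul_eq_mul_div, eq_div_iff (by positivity)]
    linarith
  intro x hx
  rw [hu_eq x hx, hu_eq 0 self_mem_Ici, mul_zero, exp_zero, mul_one]

end C2Half

theorem ContDiff.c2Half {f : ℝ → ℝ} (hf : ContDiff ℝ 2 f) :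
    C2Half f (deriv f) (iteratedDeriv 2 f) := by
  have h1 : ContDiff ℝ 1 (deriv f) := hf.iterate_deriv' 1 1
  refine ⟨fun x _ => (hf.differentiable two_ne_zero x).hasDerivAt.hasDerivWithinAt,
    fun x _ => ?_, (hf.continuous_iteratedDeriv 2 le_rfl).continuousOn⟩
  rw [iteratedDeriv_succ, iteratedDeriv_one]
  exact (h1.differentiable one_ne_zero x).hasDerivAt.hasDerivWithinAt

theorem stmt_7_general (ε μ T : ℝ) (hμ : 0 < μ)
    (ζ q : ℝ → ℝ → ℝ)
    (hq : ContDiff ℝ 3 (Function.uncurry q))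
    (mom : ∀ t ∈ Icc (0 : ℝ) T, ∀ x ∈ Ici (0 : ℝ),
      deriv (fun s => q s x) t
        - μ / 3 * iteratedDeriv 2 (fun y => deriv (fun s => q s y) t) x
        + deriv (fun y =>
            1 / (2 * ε) * ((1 + ε * ζ t y) ^ 2 - 1)
              + ε * (q t y) ^ 2 / (1 + ε * ζ t y)) x = 0)
    (t : ℝ) (ht : t ∈ Icc (0 : ℝ) T)
    (hL2 : SqInt (fun x => deriv (fun s => q s x) t))
    (w w' w'' : ℝ → ℝ) (hw : C2Half w w' w'') (hwL2 : SqInt w)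
    (hweq : ∀ x ∈ Ici (0 : ℝ),
      w x - μ / 3 * w'' x =
        -(deriv (fun y =>
            1 / (2 * ε) * ((1 + ε * ζ t y) ^ 2 - 1)
              + ε * (q t y) ^ 2 / (1 + ε * ζ t y)) x))
    (hw0 : w 0 = 0) :
    ∀ x ∈ Ici (0 : ℝ),
      deriv (fun s => q s x) t
        = w x + deriv (fun s => q s 0) t * Real.exp (-x / Real.sqrt (μ / 3)) := by
  set v : ℝ → ℝ := fun x => deriv (fun s => q s x) t
  have hv : ContDiff ℝ 2 v := contDiff_deriv_fst (n := 2) hq t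
  set k := (√(μ / 3))⁻¹
  have hk : 0 < k := by positivity
  have hode : ∀ x ∈ Ici (0 : ℝ), (iteratedDeriv 2 v - w'') x = k ^ 2 * (v - w) x := by
    intro x hx
    have hk2 : k ^ 2 = 3 / μ := by rw [inv_pow, sq_sqrt (by positivity), inv_div]
    rw [hk2, Pi.sub_apply, Pi.sub_apply]
    field_simp
    linarith [mom t ht x hx, hweq x hx]
  have hdecay := (hv.c2Half.sub hw).eq_mul_exp_neg_of_memLp hk hode
    ((hL2.memLp hv.continuous.continuousOn).sub
      (hwL2.memLp (hw.continuousOn.mono Ioi_subset_Ici_self)))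
  intro x hx
  have hx' := hdecay x hx
  rw [Pi.sub_apply, Pi.sub_apply, hw0, sub_zero, neg_mul, ← div_eq_inv_mul, ← neg_div] at hx'
  linarith

/-- For a C³ solution of the momentum equation of the dimensionless
Abbott–Boussinesq system, at each fixed time `t` the time derivative `∂ₜq(t,·)`
equals `R₀(−∂ₓ𝔣) + ∂ₜq(t,0)·exp(−x/δ)`, where `w = R₀(−∂ₓ𝔣)` is the Dirichlet
half-line solution and `δ = √(μ/3)`: the dispersive boundary layer. -/
theorem stmt_7 (ε μ T : ℝ) (hε : 0 < ε) (hμ : 0 < μ) (hT : 0 < T)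
    (ζ q : ℝ → ℝ → ℝ)
    (hζ : ContDiff ℝ 3 (Function.uncurry ζ))
    (hq : ContDiff ℝ 3 (Function.uncurry q))
    (hpos : ∀ t x, 0 < 1 + ε * ζ t x)
    (mom : ∀ t ∈ Icc (0 : ℝ) T, ∀ x ∈ Ici (0 : ℝ),
      deriv (fun s => q s x) t
        - μ / 3 * iteratedDeriv 2 (fun y => deriv (fun s => q s y) t) x
        + deriv (fun y =>
            1 / (2 * ε) * ((1 + ε * ζ t y) ^ 2 - 1)
              + ε * (q t y) ^ 2 / (1 + ε * ζ t y)) x = 0)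
    (t : ℝ) (ht : t ∈ Icc (0 : ℝ) T)
    (hL2 : SqInt (fun x => deriv (fun s => q s x) t))
    (w w' w'' : ℝ → ℝ) (hw : C2Half w w' w'') (hwL2 : SqInt w)
    (hweq : ∀ x ∈ Ici (0 : ℝ),
      w x - μ / 3 * w'' x =
        -(deriv (fun y =>
            1 / (2 * ε) * ((1 + ε * ζ t y) ^ 2 - 1)
              + ε * (q t y) ^ 2 / (1 + ε * ζ t y)) x))
    (hw0 : w 0 = 0) :
    ∀ x ∈ Ici (0 : ℝ),
      deriv (fun s => q s x) t
        = w x + deriv (fun s => q s 0) t * Real.exp (-x / Real.sqrt (μ / 3)) :=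
  stmt_7_general ε μ T hμ ζ q hq mom t ht hL2 w w' w'' hw hwL2 hweq hw0
end

section
/- Let ε, μ > 0, δ := √(μ/3), T > 0, and let ζ, q : [0,T] × [0,∞) → ℝ be of class C³ (all partial derivatives up to order three exist and are continuous) with h := 1 + εζ > 0 everywhere, satisfying both equations of the dimensionless Abbott–Boussinesq system: ∂_t ζ + ∂_x q = 0 and ∂_t q − (μ/3) ∂_x² ∂_t q + ∂_x 𝔣(ζ, q) = 0 on [0,T] × [0,∞), where 𝔣(ζ,q) = (1/(2ε))(h² − 1) + ε q²/h. Fix t ∈ [0,T]; suppose that x ↦ ∂_t q(t,x) is square-integrable on (0,∞), and that v : [0,∞) → ℝ is a C³ function with v, v′, v″, v‴ square-integrable on (0,∞), satisfying v − (μ/3) v″ = 𝔣(ζ,q)(t,·) on [0,∞) and v′(0) = 0. Then for all x ≥ 0, ∂_t² ζ(t,x) = (1/δ²) ( v(x) − 𝔣(ζ,q)(t,x) ) + (1/δ) ∂_t q(t,0) · exp(−x/δ). -/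
/-!
Put `W := ∂ₜq(t, ·)` and `U := W + v′`. Subtracting the `x`-derivative of `v − δ² v″ = 𝔣`
from the momentum equation `W − δ² W″ + ∂ₓ𝔣 = 0` gives `U − δ² U″ = 0` on `[0, ∞)`.
Since `U ∈ L²`, the growing mode `e^{x/δ}` is absent, so `U = U(0) e^{−x/δ}` with
`U(0) = W(0)` by `v′(0) = 0`. Mass conservation and symmetry of mixed partials give
`∂ₜ²ζ = −∂ₓ∂ₜq = −W′ = v″ − U′`, and `v″ = (v − 𝔣)/δ²`.
-/

open Set MeasureTheory Function Filter Real

section PartialDeriv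

variable {E : Type*} [NormedAddCommGroup E] [NormedSpace ℝ E] {f : ℝ → ℝ → E}

noncomputable def partialFst (f : ℝ → ℝ → E) (s y : ℝ) : E := deriv (fun s' => f s' y) s

noncomputable def partialSnd (f : ℝ → ℝ → E) (s y : ℝ) : E := deriv (fun y' => f s y') y

lemma hasDerivAt_fderiv_fst (hf : Differentiable ℝ (uncurry f)) (s y : ℝ) :
    HasDerivAt (fun s' => f s' y) (fderiv ℝ (uncurry f) (s, y) (1, 0)) s :=
  (hf (s, y)).hasFDerivAt.comp_hasDerivAt (l := uncurry f) s
    ((hasDerivAt_id s).prodMk (hasDerivAt_const s y))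

lemma hasDerivAt_fderiv_snd (hf : Differentiable ℝ (uncurry f)) (s y : ℝ) :
    HasDerivAt (fun y' => f s y') (fderiv ℝ (uncurry f) (s, y) (0, 1)) y :=
  (hf (s, y)).hasFDerivAt.comp_hasDerivAt (l := uncurry f) y
    ((hasDerivAt_const y s).prodMk (hasDerivAt_id y))

lemma uncurry_partialFst (hf : Differentiable ℝ (uncurry f)) :
    uncurry (partialFst f) = fun p => fderiv ℝ (uncurry f) p (1, 0) :=
  funext fun p => (hasDerivAt_fderiv_fst hf p.1 p.2).deriv

lemma uncurry_partialSnd (hf : Differentiable ℝ (uncurry f)) :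
    uncurry (partialSnd f) = fun p => fderiv ℝ (uncurry f) p (0, 1) :=
  funext fun p => (hasDerivAt_fderiv_snd hf p.1 p.2).deriv

lemma hasDerivAt_partialFst {n : WithTop ℕ∞} (hf : ContDiff ℝ n (uncurry f)) (hn : n ≠ 0)
    (s y : ℝ) : HasDerivAt (fun s' => f s' y) (partialFst f s y) s :=
  (hasDerivAt_fderiv_fst (hf.differentiable hn) s y).differentiableAt.hasDerivAt

lemma hasDerivAt_partialSnd {n : WithTop ℕ∞} (hf : ContDiff ℝ n (uncurry f)) (hn : n ≠ 0)
    (s y : ℝ) : HasDerivAt (fun y' => f s y') (partialSnd f s y) y :=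
  (hasDerivAt_fderiv_snd (hf.differentiable hn) s y).differentiableAt.hasDerivAt

lemma contDiff_uncurry_partialFst {m n : WithTop ℕ∞} (hf : ContDiff ℝ n (uncurry f))
    (hmn : m + 1 ≤ n) : ContDiff ℝ m (uncurry (partialFst f)) := by
  rw [uncurry_partialFst (hf.differentiable (zero_lt_one.trans_le (le_add_self.trans hmn)).ne')]
  exact (hf.fderiv_right hmn).clm_apply contDiff_const

lemma contDiff_uncurry_partialSnd {m n : WithTop ℕ∞} (hf : ContDiff ℝ n (uncurry f))
    (hmn : m + 1 ≤ n) : ContDiff ℝ m (uncurry (partialSnd f)) := by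
  rw [uncurry_partialSnd (hf.differentiable (zero_lt_one.trans_le (le_add_self.trans hmn)).ne')]
  exact (hf.fderiv_right hmn).clm_apply contDiff_const

lemma partialFst_partialSnd (hf : ContDiff ℝ 2 (uncurry f)) :
    partialFst (partialSnd f) = partialSnd (partialFst f) := by
  have hd := (hf.fderiv_right (m := 1) (by norm_num)).differentiable one_ne_zero
  have hsymm := fun p => (hf.contDiffAt (x := p)).isSymmSndFDerivAt (by simp)
  ext s y
  rw [← uncurry_apply_pair (partialFst _), ← uncurry_apply_pair (partialSnd _),
    uncurry_partialFst ((contDiff_uncurry_partialSnd hf (m := 1) (by norm_num)).differentiable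
      one_ne_zero),
    uncurry_partialSnd ((contDiff_uncurry_partialFst hf (m := 1) (by norm_num)).differentiable
      one_ne_zero),
    uncurry_partialSnd (hf.differentiable (by simp)),
    uncurry_partialFst (hf.differentiable (by simp))]
  simp [fderiv_clm_apply (hd _) (differentiableAt_const _), hsymm (s, y) (1, 0) (0, 1)]

end PartialDeriv

lemma SqInt.add {f g : ℝ → ℝ} (hf : SqInt f) (hg : SqInt g)
    (hfm : AEStronglyMeasurable f (volume.restrict (Ioi 0)))
    (hgm : AEStronglyMeasurable g (volume.restrict (Ioi 0))) : SqInt (f + g) :=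
  (memLp_two_iff_integrable_sq (hfm.add hgm)).1
    (((memLp_two_iff_integrable_sq hfm).2 hf).add ((memLp_two_iff_integrable_sq hgm).2 hg))

lemma aestronglyMeasurable_of_hasDerivWithinAt_Ici {f f' : ℝ → ℝ}
    (hf : ∀ y ∈ Ici (0 : ℝ), HasDerivWithinAt f (f' y) (Ici 0) y) :
    AEStronglyMeasurable f (volume.restrict (Ioi 0)) :=
  (ContinuousOn.mono (fun y hy => (hf y hy).continuousWithinAt)
    Ioi_subset_Ici_self).aestronglyMeasurable measurableSet_Ioi

lemma eq_of_hasDerivWithinAt_Ici_zero {f : ℝ → ℝ}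
    (hf : ∀ y ∈ Ici (0 : ℝ), HasDerivWithinAt f 0 (Ici 0) y) :
    ∀ y ∈ Ici (0 : ℝ), f y = f 0 := fun y hy =>
  constant_of_has_deriv_right_zero
    (fun z hz => (hf z hz.1).continuousWithinAt.mono Icc_subset_Ici_self)
    (fun z hz => (hf z hz.1).mono (Ici_subset_Ici.mpr hz.1)) y ⟨hy, le_rfl⟩

section HalfLineODE

variable {U U' : ℝ → ℝ}

lemma sub_mul_mul_exp_eq_of_hasDerivWithinAt (b : ℝ)
    (hU : ∀ y ∈ Ici (0 : ℝ), HasDerivWithinAt U (U' y) (Ici 0) y)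
    (hU' : ∀ y ∈ Ici (0 : ℝ), HasDerivWithinAt U' (b ^ 2 * U y) (Ici 0) y) :
    ∀ y ∈ Ici (0 : ℝ), (U' y - b * U y) * exp (b * y) = U' 0 - b * U 0 := by
  have hderiv : ∀ y ∈ Ici (0 : ℝ),
      HasDerivWithinAt (fun z => (U' z - b * U z) * exp (b * z)) 0 (Ici 0) y := by
    intro y hy
    have hexp : HasDerivAt (fun z => exp (b * z)) (exp (b * y) * b) y := by
      simpa using ((hasDerivAt_id y).const_mul b).exp
    exact (((hU' y hy).fun_sub ((hU y hy).const_mul b)).fun_mul hexp.hasDerivWithinAt).congr_deriv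
      (by ring)
  simpa using eq_of_hasDerivWithinAt_Ici_zero hderiv

lemma eq_neg_mul_exp_of_sqInt {a : ℝ} (ha : 0 < a)
    (hU : ∀ y ∈ Ici (0 : ℝ), HasDerivWithinAt U (U' y) (Ici 0) y)
    (hU' : ∀ y ∈ Ici (0 : ℝ), HasDerivWithinAt U' (a ^ 2 * U y) (Ici 0) y)
    (hsq : SqInt U) :
    ∀ y ∈ Ici (0 : ℝ), U' y = -(a * U 0 * exp (-a * y)) := by
  have hgrow := sub_mul_mul_exp_eq_of_hasDerivWithinAt (-a) hU (by simpa only [neg_sq] using hU')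
  have hdecay := sub_mul_mul_exp_eq_of_hasDerivWithinAt a hU hU'
  -- `U e^{-ay}` tends to `(U'(0) + aU(0)) / 2a` and is square-integrable, so this limit vanishes.
  have hform : ∀ y ∈ Ici (0 : ℝ), U y * exp (-a * y) =
      ((U' 0 + a * U 0) - (U' 0 - a * U 0) * exp (-a * y) ^ 2) / (2 * a) := by
    intro y hy
    have hexp : exp (a * y) * exp (-a * y) = 1 := by rw [← exp_add]; simp
    rw [eq_div_iff (by positivity)]
    linear_combination hgrow y hy - exp (-a * y) ^ 2 * hdecay y hy
      + (U' y - a * U y) * exp (-a * y) * hexp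
  have hint : IntegrableOn (fun y => (U y * exp (-a * y)) ^ 2) (Ioi 0) := by
    have hbdd : ∀ᵐ y ∂(volume.restrict (Ioi 0)), ‖exp (-a * y) ^ 2‖ ≤ 1 := by
      refine ae_restrict_of_forall_mem measurableSet_Ioi fun y hy => ?_
      rw [norm_of_nonneg (by positivity), ← exp_nat_mul, exp_le_one_iff]
      push_cast
      nlinarith [mul_pos ha (mem_Ioi.mp hy)]
    show Integrable _ (volume.restrict (Ioi 0))
    simpa only [mul_pow] using
      hsq.mul_bdd (by fun_prop : Continuous fun y => exp (-a * y) ^ 2).aestronglyMeasurable hbdd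
  have hlim : Tendsto (fun y => (U y * exp (-a * y)) ^ 2) atTop
      (nhds (((U' 0 + a * U 0) / (2 * a)) ^ 2)) := by
    have hexp : Tendsto (fun y => exp (-a * y)) atTop (nhds 0) := by
      simpa only [Function.comp_def, id, neg_mul] using
        tendsto_exp_neg_atTop_nhds_zero.comp (tendsto_id.const_mul_atTop ha)
    have hlim' : Tendsto
        (fun y => (((U' 0 + a * U 0) - (U' 0 - a * U 0) * exp (-a * y) ^ 2) / (2 * a)) ^ 2)
        atTop (nhds (((U' 0 + a * U 0) / (2 * a)) ^ 2)) := by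
      simpa using
        ((tendsto_const_nhds.sub (tendsto_const_nhds.mul (hexp.pow 2))).div_const (2 * a)).pow 2
    refine hlim'.congr' ?_
    filter_upwards [eventually_ge_atTop 0] with y hy
    rw [hform y hy]
  have hc : U' 0 + a * U 0 = 0 := by
    have hinf : ∀ s ∈ (atTop : Filter ℝ), volume s = ⊤ := by
      intro s hs
      obtain ⟨b, hb⟩ := mem_atTop_sets.1 hs
      rw [← top_le_iff, ← Real.volume_Ici (a := b)]
      exact measure_mono hb
    have := IntegrableAtFilter.eq_zero_of_tendsto ⟨Ioi 0, Ioi_mem_atTop (0 : ℝ), hint⟩ hinf hlim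
    simpa [ha.ne'] using this
  intro y hy
  have hexp : exp (a * y) * exp (-a * y) = 1 := by rw [← exp_add]; simp
  linear_combination (exp (a * y) * hgrow y hy + exp (-a * y) * hdecay y hy
    - (2 * U' y) * hexp + (exp (a * y) + exp (-a * y)) * hc) / 2

lemma add_eq_neg_mul_exp_of_sqInt {a : ℝ} (ha : 0 < a) {V V' V'' : ℝ → ℝ}
    (hU : ∀ y ∈ Ici (0 : ℝ), HasDerivWithinAt U (U' y) (Ici 0) y)
    (hV : ∀ y ∈ Ici (0 : ℝ), HasDerivWithinAt V (V' y) (Ici 0) y)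
    (hV' : ∀ y ∈ Ici (0 : ℝ), HasDerivWithinAt V' (V'' y) (Ici 0) y)
    (hUV : ∀ y ∈ Ici (0 : ℝ), HasDerivWithinAt U' (a ^ 2 * (U y + V y) - V'' y) (Ici 0) y)
    (hUsq : SqInt U) (hVsq : SqInt V) :
    ∀ y ∈ Ici (0 : ℝ), U' y + V' y = -(a * (U 0 + V 0) * exp (-a * y)) := by
  have hV'' := fun y hy => (hUV y hy).add (hV' y hy)
  simp only [sub_add_cancel] at hV''
  exact eq_neg_mul_exp_of_sqInt ha (U := U + V) (U' := U' + V')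
    (fun y hy => (hU y hy).add (hV y hy)) hV''
    (hUsq.add hVsq (aestronglyMeasurable_of_hasDerivWithinAt_Ici hU)
      (aestronglyMeasurable_of_hasDerivWithinAt_Ici hV))

end HalfLineODE

lemma iteratedDeriv_two_fst_eq_neg_partialSnd_partialFst {ζ q : ℝ → ℝ → ℝ} {T t x : ℝ}
    (hζ : ContDiff ℝ 2 (uncurry ζ)) (hq : ContDiff ℝ 2 (uncurry q)) (hT : 0 < T)
    (ht : t ∈ Icc 0 T) (mass : ∀ s ∈ Icc 0 T, partialFst ζ s x + partialSnd q s x = 0) :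
    iteratedDeriv 2 (fun s => ζ s x) t = -partialSnd (partialFst q) t x := by
  have hζt := hasDerivAt_partialFst (contDiff_uncurry_partialFst hζ (m := 1) (by norm_num))
    one_ne_zero t x
  have hqx := hasDerivAt_partialFst (contDiff_uncurry_partialSnd hq (m := 1) (by norm_num))
    one_ne_zero t x
  rw [iteratedDeriv_succ, iteratedDeriv_one, ← partialFst_partialSnd hq]
  exact (uniqueDiffOn_Icc hT t ht).eq_deriv _ hζt.hasDerivWithinAt
    (hqx.neg.hasDerivWithinAt.congr (fun s hs => eq_neg_of_add_eq_zero_left (mass s hs))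
      (eq_neg_of_add_eq_zero_left (mass t ht)))

lemma neg_deriv_eq_of_momentum_of_neumann {μ : ℝ} (hμ : 0 < μ) {W W' W'' F v v1 v2 v3 : ℝ → ℝ}
    (hW : ∀ y, HasDerivAt W (W' y) y) (hW' : ∀ y, HasDerivAt W' (W'' y) y)
    (hF : ∀ y ∈ Ici (0 : ℝ), DifferentiableAt ℝ F y)
    (hmom : ∀ y ∈ Ici (0 : ℝ), W y - μ / 3 * W'' y + deriv F y = 0)
    (hv1 : ∀ y ∈ Ici (0 : ℝ), HasDerivWithinAt v (v1 y) (Ici 0) y)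
    (hv2 : ∀ y ∈ Ici (0 : ℝ), HasDerivWithinAt v1 (v2 y) (Ici 0) y)
    (hv3 : ∀ y ∈ Ici (0 : ℝ), HasDerivWithinAt v2 (v3 y) (Ici 0) y)
    (hveq : ∀ y ∈ Ici (0 : ℝ), v y - μ / 3 * v2 y = F y) (hvN : v1 0 = 0)
    (hWsq : SqInt W) (hv1sq : SqInt v1) :
    ∀ x ∈ Ici (0 : ℝ), -W' x = 1 / Real.sqrt (μ / 3) ^ 2 * (v x - F x)
      + 1 / Real.sqrt (μ / 3) * W 0 * exp (-x / Real.sqrt (μ / 3)) := by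
  intro x hx
  have hFv : ∀ y ∈ Ici (0 : ℝ), deriv F y = v1 y - μ / 3 * v3 y := fun y hy =>
    (uniqueDiffOn_Ici 0 y hy).eq_deriv _ (hF y hy).hasDerivAt.hasDerivWithinAt
      (((hv1 y hy).sub ((hv3 y hy).const_mul (μ / 3))).congr (fun z hz => (hveq z hz).symm)
        (hveq y hy).symm)
  have hδ2 : Real.sqrt (μ / 3) ^ 2 = μ / 3 := Real.sq_sqrt (by positivity)
  set δ := Real.sqrt (μ / 3)
  have hδ : 0 < δ := Real.sqrt_pos.2 (by positivity)
  have hW'' : ∀ y ∈ Ici (0 : ℝ),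
      HasDerivWithinAt W' ((1 / δ) ^ 2 * (W y + v1 y) - v3 y) (Ici 0) y := by
    intro y hy
    refine (hW' y).hasDerivWithinAt.congr_deriv ?_
    rw [div_pow, one_pow, hδ2]
    field_simp
    linear_combination (-3) * (hmom y hy - hFv y hy)
  have hdecay := add_eq_neg_mul_exp_of_sqInt (by positivity) (fun y _ => (hW y).hasDerivWithinAt)
    hv2 hv3 hW'' hWsq hv1sq x hx
  rw [hvN, add_zero, show -(1 / δ) * x = -x / δ by ring] at hdecay
  rw [← hveq x hx, ← hδ2]
  calc -W' x = v2 x + 1 / δ * W 0 * exp (-x / δ) := by linarith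
    _ = _ := by field_simp; ring

theorem stmt_8_general (ε μ T : ℝ) (hμ : 0 < μ) (hT : 0 < T)
    (ζ q : ℝ → ℝ → ℝ)
    (hζ : ContDiff ℝ 3 (Function.uncurry ζ))
    (hq : ContDiff ℝ 3 (Function.uncurry q))
    (hpos : ∀ t x, 0 < 1 + ε * ζ t x)
    (mass : ∀ t ∈ Icc (0 : ℝ) T, ∀ x ∈ Ici (0 : ℝ),
      deriv (fun s => ζ s x) t + deriv (fun y => q t y) x = 0)
    (mom : ∀ t ∈ Icc (0 : ℝ) T, ∀ x ∈ Ici (0 : ℝ),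
      deriv (fun s => q s x) t
        - μ / 3 * iteratedDeriv 2 (fun y => deriv (fun s => q s y) t) x
        + deriv (fun y =>
            1 / (2 * ε) * ((1 + ε * ζ t y) ^ 2 - 1)
              + ε * (q t y) ^ 2 / (1 + ε * ζ t y)) x = 0)
    (t : ℝ) (ht : t ∈ Icc (0 : ℝ) T)
    (hL2 : SqInt (fun x => deriv (fun s => q s x) t))
    (v v1 v2 v3 : ℝ → ℝ)
    (hv1 : ∀ x ∈ Ici (0 : ℝ), HasDerivWithinAt v (v1 x) (Ici 0) x)
    (hv2 : ∀ x ∈ Ici (0 : ℝ), HasDerivWithinAt v1 (v2 x) (Ici 0) x)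
    (hv3 : ∀ x ∈ Ici (0 : ℝ), HasDerivWithinAt v2 (v3 x) (Ici 0) x)
    (hv1L2 : SqInt v1)
    (hveq : ∀ x ∈ Ici (0 : ℝ),
      v x - μ / 3 * v2 x =
        1 / (2 * ε) * ((1 + ε * ζ t x) ^ 2 - 1) + ε * (q t x) ^ 2 / (1 + ε * ζ t x))
    (hvN : v1 0 = 0) :
    ∀ x ∈ Ici (0 : ℝ),
      iteratedDeriv 2 (fun s => ζ s x) t
        = 1 / Real.sqrt (μ / 3) ^ 2 *
            (v x - (1 / (2 * ε) * ((1 + ε * ζ t x) ^ 2 - 1)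
              + ε * (q t x) ^ 2 / (1 + ε * ζ t x)))
          + 1 / Real.sqrt (μ / 3) * deriv (fun s => q s 0) t *
              Real.exp (-x / Real.sqrt (μ / 3)) := by
  intro x hx
  have hqt : ContDiff ℝ 2 (uncurry (partialFst q)) := contDiff_uncurry_partialFst hq (by norm_num)
  set F : ℝ → ℝ := fun y =>
    1 / (2 * ε) * ((1 + ε * ζ t y) ^ 2 - 1) + ε * (q t y) ^ 2 / (1 + ε * ζ t y)
  have hF : ∀ y ∈ Ici (0 : ℝ), DifferentiableAt ℝ F y := by
    intro y _
    have hζy := (hasDerivAt_partialSnd hζ (by norm_num) t y).differentiableAt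
    have hqy := (hasDerivAt_partialSnd hq (by norm_num) t y).differentiableAt
    fun_prop (disch := exact (hpos t y).ne')
  have hmom : ∀ y ∈ Ici (0 : ℝ),
      partialFst q t y - μ / 3 * partialSnd (partialSnd (partialFst q)) t y + deriv F y = 0 := by
    intro y hy
    have h := mom t ht y hy
    rwa [iteratedDeriv_succ, iteratedDeriv_one] at h
  rw [iteratedDeriv_two_fst_eq_neg_partialSnd_partialFst (hζ.of_le (by norm_num))
    (hq.of_le (by norm_num)) hT ht (fun s hs => mass s hs x hx)]
  exact neg_deriv_eq_of_momentum_of_neumann hμ (hasDerivAt_partialSnd hqt two_ne_zero t)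
    (hasDerivAt_partialSnd (contDiff_uncurry_partialSnd hqt (m := 1) (by norm_num)) one_ne_zero t)
    hF hmom hv1 hv2 hv3 hveq hvN hL2 hv1L2 x hx

/-- For a C³ solution of the dimensionless Abbott–Boussinesq system, at each
fixed time `t` one has `∂ₜ²ζ = (1/δ²)(R₁𝔣 − 𝔣) + (1/δ)∂ₜq(t,0)·exp(−x/δ)`,
where `v = R₁𝔣(t,·)` is the Neumann half-line solution and `δ = √(μ/3)`. -/
theorem stmt_8 (ε μ T : ℝ) (hε : 0 < ε) (hμ : 0 < μ) (hT : 0 < T)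
    (ζ q : ℝ → ℝ → ℝ)
    (hζ : ContDiff ℝ 3 (Function.uncurry ζ))
    (hq : ContDiff ℝ 3 (Function.uncurry q))
    (hpos : ∀ t x, 0 < 1 + ε * ζ t x)
    (mass : ∀ t ∈ Icc (0 : ℝ) T, ∀ x ∈ Ici (0 : ℝ),
      deriv (fun s => ζ s x) t + deriv (fun y => q t y) x = 0)
    (mom : ∀ t ∈ Icc (0 : ℝ) T, ∀ x ∈ Ici (0 : ℝ),
      deriv (fun s => q s x) t
        - μ / 3 * iteratedDeriv 2 (fun y => deriv (fun s => q s y) t) x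
        + deriv (fun y =>
            1 / (2 * ε) * ((1 + ε * ζ t y) ^ 2 - 1)
              + ε * (q t y) ^ 2 / (1 + ε * ζ t y)) x = 0)
    (t : ℝ) (ht : t ∈ Icc (0 : ℝ) T)
    (hL2 : SqInt (fun x => deriv (fun s => q s x) t))
    (v v1 v2 v3 : ℝ → ℝ)
    (hv1 : ∀ x ∈ Ici (0 : ℝ), HasDerivWithinAt v (v1 x) (Ici 0) x)
    (hv2 : ∀ x ∈ Ici (0 : ℝ), HasDerivWithinAt v1 (v2 x) (Ici 0) x)
    (hv3 : ∀ x ∈ Ici (0 : ℝ), HasDerivWithinAt v2 (v3 x) (Ici 0) x)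
    (hv3c : ContinuousOn v3 (Ici 0))
    (hvL2 : SqInt v) (hv1L2 : SqInt v1) (hv2L2 : SqInt v2) (hv3L2 : SqInt v3)
    (hveq : ∀ x ∈ Ici (0 : ℝ),
      v x - μ / 3 * v2 x =
        1 / (2 * ε) * ((1 + ε * ζ t x) ^ 2 - 1) + ε * (q t x) ^ 2 / (1 + ε * ζ t x))
    (hvN : v1 0 = 0) :
    ∀ x ∈ Ici (0 : ℝ),
      iteratedDeriv 2 (fun s => ζ s x) t
        = 1 / Real.sqrt (μ / 3) ^ 2 *
            (v x - (1 / (2 * ε) * ((1 + ε * ζ t x) ^ 2 - 1)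
              + ε * (q t x) ^ 2 / (1 + ε * ζ t x)))
          + 1 / Real.sqrt (μ / 3) * deriv (fun s => q s 0) t *
              Real.exp (-x / Real.sqrt (μ / 3)) :=
  stmt_8_general ε μ T hμ hT ζ q hζ hq hpos mass mom t ht hL2 v v1 v2 v3 hv1 hv2 hv3 hv1L2 hveq hvN
end

section
/- Let ε, μ > 0, δ := √(μ/3), T > 0, f ∈ C²([0,T]), and let ζ, q : [0,T] × [0,∞) → ℝ be of class C³ with 1 + εζ > 0 everywhere and 1 + ε f(t) > 0 for all t. Let v : [0,T] × [0,∞) → ℝ be continuous with, for each t, v(t,·) of class C² satisfying v(t,·) − (μ/3) ∂_x² v(t,·) = 𝔣(ζ,q)(t,·) on [0,∞) and ∂_x v(t,0) = 0, where 𝔣(ζ,q) = (1/(2ε))((1+εζ)² − 1) + ε q²/(1+εζ). Suppose (ζ, q) satisfies the reformulated system ∂_t ζ + ∂_x q = 0 and ∂_t q + ∂_x v = Q(t) exp(−x/δ) on [0,T] × [0,∞), where Q(t) := (ε/δ) q(t,0)²/(1 + ε f(t)) + δ f″(t) + (1/δ)(1 + (ε/2) f(t)) f(t) − (1/δ) v(t,0).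 If the compatibility conditions ζ(0,0) = f(0) and ∂_x q(0,0) = −f′(0) hold, then ζ(t,0) = f(t) for all t ∈ [0,T]. -/
/-!
Along the boundary the defect `g t = ζ t 0 - f t` solves a homogeneous linear second-order ODE.
The mass equation gives `g' = -∂ₓq(·,0) - f'`. Differentiating the momentum equation in `x` at
`x = 0` and using `∂ₜ∂ₓq = ∂ₓ∂ₜq` gives `∂ₓ∂ₜq(t,0) = -Q̲/δ - ∂ₓ²v(t,0)`, and the elliptic equation
at `x = 0` turns `∂ₓ²v(t,0)` into `(v(t,0) - 𝔣(t,0))/δ²`. The boundary values of `v` then cancel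
against those in `Q̲`, leaving `g'' = c g` with a continuous coefficient `c`. The compatibility
conditions say `g 0 = g' 0 = 0`, so Grönwall's inequality forces `g = 0`.
-/

open Set Function

section Slices

variable {E : Type*} [NormedAddCommGroup E] [NormedSpace ℝ E]

theorem HasFDerivAt.hasDerivAt_fst_slice {Φ : ℝ × ℝ → E} {Φ' : ℝ × ℝ →L[ℝ] E} {t x : ℝ}
    (h : HasFDerivAt Φ Φ' (t, x)) : HasDerivAt (fun s => Φ (s, x)) (Φ' (1, 0)) t :=
  h.comp_hasDerivAt t ((hasDerivAt_id t).prodMk (hasDerivAt_const t x))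

theorem HasFDerivAt.hasDerivAt_snd_slice {Φ : ℝ × ℝ → E} {Φ' : ℝ × ℝ →L[ℝ] E} {t x : ℝ}
    (h : HasFDerivAt Φ Φ' (t, x)) : HasDerivAt (fun y => Φ (t, y)) (Φ' (0, 1)) x :=
  h.comp_hasDerivAt x ((hasDerivAt_const x t).prodMk (hasDerivAt_id x))

variable {F : ℝ → ℝ → E}

theorem ContDiff.deriv_fst_slice_eq (hF : ContDiff ℝ 1 (uncurry F)) (t x : ℝ) :
    deriv (fun s => F s x) t = fderiv ℝ (uncurry F) (t, x) (1, 0) :=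
  ((hF.differentiable one_ne_zero (t, x)).hasFDerivAt.hasDerivAt_fst_slice).deriv

theorem ContDiff.deriv_snd_slice_eq (hF : ContDiff ℝ 1 (uncurry F)) (t x : ℝ) :
    deriv (fun y => F t y) x = fderiv ℝ (uncurry F) (t, x) (0, 1) :=
  ((hF.differentiable one_ne_zero (t, x)).hasFDerivAt.hasDerivAt_snd_slice).deriv

theorem hasFDerivAt_fderiv_apply {Φ : ℝ × ℝ → E} (hΦ : ContDiff ℝ 2 Φ) (p w : ℝ × ℝ) :
    HasFDerivAt (fun p => fderiv ℝ Φ p w) ((fderiv ℝ (fderiv ℝ Φ) p).flip w) p := by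
  have hd : DifferentiableAt ℝ (fderiv ℝ Φ) p :=
    (hΦ.fderiv_right (m := 1) le_rfl).differentiable one_ne_zero p
  simpa using hd.hasFDerivAt.clm_apply (hasFDerivAt_const w p)

theorem ContDiff.hasDerivAt_deriv_snd_slice (hF : ContDiff ℝ 2 (uncurry F)) (t x : ℝ) :
    HasDerivAt (fun y => deriv (fun s => F s y) t)
      (fderiv ℝ (fderiv ℝ (uncurry F)) (t, x) (0, 1) (1, 0)) x := by
  simp only [(hF.of_le (by norm_num)).deriv_fst_slice_eq]
  exact (hasFDerivAt_fderiv_apply hF (t, x) (1, 0)).hasDerivAt_snd_slice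

theorem ContDiff.hasDerivAt_deriv_fst_slice (hF : ContDiff ℝ 2 (uncurry F)) (t x : ℝ) :
    HasDerivAt (fun s => deriv (fun y => F s y) x)
      (fderiv ℝ (fderiv ℝ (uncurry F)) (t, x) (0, 1) (1, 0)) t := by
  simp only [(hF.of_le (by norm_num)).deriv_snd_slice_eq]
  rw [(hF.contDiffAt.isSymmSndFDerivAt (by simp)).eq]
  exact (hasFDerivAt_fderiv_apply hF (t, x) (0, 1)).hasDerivAt_fst_slice

end Slices

theorem eq_zero_of_second_order_linear_of_eq_zero_right {g g' c : ℝ → ℝ} {a b : ℝ}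
    (hg : ContinuousOn g (Icc a b)) (hg' : ContinuousOn g' (Icc a b))
    (hc : ContinuousOn c (Icc a b))
    (hderiv : ∀ x ∈ Ico a b, HasDerivWithinAt g (g' x) (Ici x) x)
    (hderiv' : ∀ x ∈ Ico a b, HasDerivWithinAt g' (c x * g x) (Ici x) x)
    (ha : g a = 0) (ha' : g' a = 0) :
    ∀ x ∈ Icc a b, g x = 0 := by
  obtain ⟨C, hC⟩ := isCompact_Icc.exists_bound_of_continuousOn hc
  have hK : ∀ x ∈ Ico a b, ‖(g' x, c x * g x)‖ ≤ max C 1 * ‖(g x, g' x)‖ := by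
    intro x hx
    have hcx : |c x| ≤ max C 1 := (hC x (Ico_subset_Icc_self hx)).trans (le_max_left _ _)
    simp only [Prod.norm_def, Real.norm_eq_abs, abs_mul]
    refine max_le ?_ ?_
    · exact (le_max_right _ _).trans
        (le_mul_of_one_le_left (le_max_of_le_left (abs_nonneg _)) (le_max_right _ _))
    · exact mul_le_mul hcx (le_max_left _ _) (abs_nonneg _) ((abs_nonneg _).trans hcx)
  intro x hx
  have := eq_zero_of_abs_deriv_le_mul_abs_self_of_eq_zero_right (hg.prodMk hg')
    (fun x hx => (hderiv x hx).prodMk (hderiv' x hx)) (by simp [ha, ha']) hK x hx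
  exact congrArg Prod.fst this

noncomputable def boundaryCoeff (ε μ z w p : ℝ) : ℝ :=
  (ε ^ 2 * p ^ 2 / ((1 + ε * w) * (1 + ε * z)) - 1 - ε / 2 * (z + w)) / (μ / 3)

theorem Continuous.boundaryCoeff {X : Type*} [TopologicalSpace X] {ε μ : ℝ} {z w p : X → ℝ}
    (hz : Continuous z) (hw : Continuous w) (hp : Continuous p)
    (hz₀ : ∀ s, 1 + ε * z s ≠ 0) (hw₀ : ∀ s, 1 + ε * w s ≠ 0) :
    Continuous fun s => boundaryCoeff ε μ (z s) (w s) (p s) := by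
  unfold _root_.boundaryCoeff
  fun_prop (disch := exact fun s => mul_ne_zero (hw₀ s) (hz₀ s))

theorem boundaryCoeff_mul_sub {ε μ z w p V V₂ f₂ : ℝ} (hε : ε ≠ 0) (hμ : 0 < μ)
    (hz : 1 + ε * z ≠ 0) (hw : 1 + ε * w ≠ 0)
    (hV : V - μ / 3 * V₂ = 1 / (2 * ε) * ((1 + ε * z) ^ 2 - 1) + ε * p ^ 2 / (1 + ε * z)) :
    V₂ + (ε / √(μ / 3) * p ^ 2 / (1 + ε * w) + √(μ / 3) * f₂
        + 1 / √(μ / 3) * (1 + ε / 2 * w) * w - 1 / √(μ / 3) * V) / √(μ / 3) - f₂ =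
      boundaryCoeff ε μ z w p * (z - w) := by
  have hV' : V = 1 / (2 * ε) * ((1 + ε * z) ^ 2 - 1) + ε * p ^ 2 / (1 + ε * z) + μ / 3 * V₂ := by
    linarith
  have hδ : μ / 3 = √(μ / 3) ^ 2 := (Real.sq_sqrt (by positivity)).symm
  have hδ₀ : √(μ / 3) ≠ 0 := (Real.sqrt_pos.2 (by positivity)).ne'
  rw [hV', boundaryCoeff]
  -- so that rewriting `μ / 3` does not reach inside `√(μ / 3)`
  generalize √(μ / 3) = δ at hδ hδ₀ ⊢
  rw [hδ]
  field_simp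
  ring

theorem ContDiff.eq_neg_div_sub_of_deriv_add_eq_mul_exp {q : ℝ → ℝ → ℝ} {φ : ℝ → ℝ} {φ' Q δ t : ℝ}
    (hq : ContDiff ℝ 2 (uncurry q)) (hφ : HasDerivWithinAt φ φ' (Ici 0) 0)
    (hmom : ∀ x ∈ Ici (0 : ℝ), deriv (fun s => q s x) t + φ x = Q * Real.exp (-x / δ)) :
    φ' = -(Q / δ) - fderiv ℝ (fderiv ℝ (uncurry q)) (t, 0) (0, 1) (1, 0) := by
  have hexp : HasDerivAt (fun x => Q * Real.exp (-x / δ)) (-(Q / δ)) 0 := by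
    refine ((((hasDerivAt_id' 0).fun_neg.div_const δ).exp).const_mul Q).congr_deriv ?_
    simp only [neg_zero, zero_div, Real.exp_zero, one_mul]
    ring
  have hφ_eq : ∀ x ∈ Ici (0 : ℝ), φ x = Q * Real.exp (-x / δ) - deriv (fun s => q s x) t :=
    fun x hx => by linarith [hmom x hx]
  exact (uniqueDiffWithinAt_Ici 0).eq_deriv _ hφ <|
    (hexp.sub (hq.hasDerivAt_deriv_snd_slice t 0)).hasDerivWithinAt.congr hφ_eq
      (hφ_eq 0 self_mem_Ici)

theorem stmt_10_general (ε μ T : ℝ) (hε : 0 < ε) (hμ : 0 < μ)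
    (f : ℝ → ℝ) (hf : ContDiff ℝ 2 f)
    (ζ q : ℝ → ℝ → ℝ)
    (hζ : ContDiff ℝ 3 (Function.uncurry ζ))
    (hq : ContDiff ℝ 3 (Function.uncurry q))
    (hpos : ∀ t x, 0 < 1 + ε * ζ t x)
    (hfpos : ∀ t, 0 < 1 + ε * f t)
    (v v1 v2 : ℝ → ℝ → ℝ)
    (hv2 : ∀ t ∈ Icc (0 : ℝ) T, ∀ x ∈ Ici (0 : ℝ),
      HasDerivWithinAt (v1 t) (v2 t x) (Ici 0) x)
    (hveq : ∀ t ∈ Icc (0 : ℝ) T, ∀ x ∈ Ici (0 : ℝ),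
      v t x - μ / 3 * v2 t x =
        1 / (2 * ε) * ((1 + ε * ζ t x) ^ 2 - 1) + ε * (q t x) ^ 2 / (1 + ε * ζ t x))
    (mass : ∀ t ∈ Icc (0 : ℝ) T, ∀ x ∈ Ici (0 : ℝ),
      deriv (fun s => ζ s x) t + deriv (fun y => q t y) x = 0)
    (mom : ∀ t ∈ Icc (0 : ℝ) T, ∀ x ∈ Ici (0 : ℝ),
      deriv (fun s => q s x) t + v1 t x =
        (ε / Real.sqrt (μ / 3) * (q t 0) ^ 2 / (1 + ε * f t)
          + Real.sqrt (μ / 3) * iteratedDeriv 2 f t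
          + 1 / Real.sqrt (μ / 3) * (1 + ε / 2 * f t) * f t
          - 1 / Real.sqrt (μ / 3) * v t 0) * Real.exp (-x / Real.sqrt (μ / 3)))
    (hcomp1 : ζ 0 0 = f 0)
    (hcomp2 : deriv (fun y => q 0 y) 0 = -deriv f 0) :
    ∀ t ∈ Icc (0 : ℝ) T, ζ t 0 = f t := by
  have hq₂ : ContDiff ℝ 2 (uncurry q) := hq.of_le (by norm_num)
  have hζ₀ : ContDiff ℝ 1 fun s => ζ s 0 :=
    (hζ.comp (contDiff_id.prodMk contDiff_const)).of_le (by norm_num)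
  have hqx : Continuous fun s => deriv (fun y => q s y) 0 :=
    continuous_iff_continuousAt.2 fun s => (hq₂.hasDerivAt_deriv_fst_slice s 0).continuousAt
  have hf' : ∀ s, HasDerivAt (deriv f) (iteratedDeriv 2 f s) s := fun s => by
    have := (hf.differentiable_iteratedDeriv 1 (by norm_num) s).hasDerivAt
    rwa [← iteratedDeriv_succ, iteratedDeriv_one] at this
  intro t ht
  refine sub_eq_zero.1 <| eq_zero_of_second_order_linear_of_eq_zero_right
    (g := fun s => ζ s 0 - f s) (g' := fun s => -deriv (fun y => q s y) 0 - deriv f s)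
    (c := fun s => boundaryCoeff ε μ (ζ s 0) (f s) (q s 0))
    (hζ₀.continuous.sub hf.continuous).continuousOn
    (hqx.neg.sub (hf.continuous_deriv (by norm_num))).continuousOn
    (Continuous.boundaryCoeff hζ₀.continuous hf.continuous
      (hq.continuous.comp (continuous_id.prodMk continuous_const))
      (fun s => (hpos s 0).ne') (fun s => (hfpos s).ne')).continuousOn
    (fun s hs => ?_) (fun s hs => ?_) (sub_eq_zero.2 hcomp1) (by rw [hcomp2]; ring) t ht
  · refine ((hζ₀.differentiable one_ne_zero s).hasDerivAt.sub
      (hf.differentiable (by norm_num) s).hasDerivAt).hasDerivWithinAt.congr_deriv ?_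
    linarith [mass s (Ico_subset_Icc_self hs) 0 self_mem_Ici]
  · have hs' := Ico_subset_Icc_self hs
    refine ((hq₂.hasDerivAt_deriv_fst_slice s 0).neg.sub (hf' s)).hasDerivWithinAt.congr_deriv ?_
    rw [← boundaryCoeff_mul_sub (f₂ := iteratedDeriv 2 f s) hε.ne' hμ (hpos s 0).ne'
        (hfpos s).ne' (hveq s hs' 0 self_mem_Ici),
      hq₂.eq_neg_div_sub_of_deriv_add_eq_mul_exp (hv2 s hs' 0 self_mem_Ici) (mom s hs')]
    ring

/-- Solutions of the reformulated Boussinesq system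
`∂ₜζ + ∂ₓq = 0`, `∂ₜq + ∂ₓR₁𝔣 = Q̲(q̄,f,f″,ζ,q) exp(−x/δ)` satisfying the
compatibility conditions `ζ(0,0) = f(0)` and `∂ₓq(0,0) = −f′(0)` satisfy the
generating boundary condition `ζ(t,0) = f(t)` for all times. Here `v(t,·)`
represents `R₁𝔣(ζ,q)(t,·)` (Neumann half-line solution, `∂ₓv = v1`,
`∂ₓ²v = v2`) and `δ = √(μ/3)`. -/
theorem stmt_10 (ε μ T : ℝ) (hε : 0 < ε) (hμ : 0 < μ) (hT : 0 < T)
    (f : ℝ → ℝ) (hf : ContDiff ℝ 2 f)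
    (ζ q : ℝ → ℝ → ℝ)
    (hζ : ContDiff ℝ 3 (Function.uncurry ζ))
    (hq : ContDiff ℝ 3 (Function.uncurry q))
    (hpos : ∀ t x, 0 < 1 + ε * ζ t x)
    (hfpos : ∀ t, 0 < 1 + ε * f t)
    (v v1 v2 : ℝ → ℝ → ℝ)
    (hvcont : Continuous (Function.uncurry v))
    (hv1 : ∀ t ∈ Icc (0 : ℝ) T, ∀ x ∈ Ici (0 : ℝ),
      HasDerivWithinAt (v t) (v1 t x) (Ici 0) x)
    (hv2 : ∀ t ∈ Icc (0 : ℝ) T, ∀ x ∈ Ici (0 : ℝ),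
      HasDerivWithinAt (v1 t) (v2 t x) (Ici 0) x)
    (hv2c : ∀ t ∈ Icc (0 : ℝ) T, ContinuousOn (v2 t) (Ici 0))
    (hveq : ∀ t ∈ Icc (0 : ℝ) T, ∀ x ∈ Ici (0 : ℝ),
      v t x - μ / 3 * v2 t x =
        1 / (2 * ε) * ((1 + ε * ζ t x) ^ 2 - 1) + ε * (q t x) ^ 2 / (1 + ε * ζ t x))
    (hvN : ∀ t ∈ Icc (0 : ℝ) T, v1 t 0 = 0)
    (mass : ∀ t ∈ Icc (0 : ℝ) T, ∀ x ∈ Ici (0 : ℝ),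
      deriv (fun s => ζ s x) t + deriv (fun y => q t y) x = 0)
    (mom : ∀ t ∈ Icc (0 : ℝ) T, ∀ x ∈ Ici (0 : ℝ),
      deriv (fun s => q s x) t + v1 t x =
        (ε / Real.sqrt (μ / 3) * (q t 0) ^ 2 / (1 + ε * f t)
          + Real.sqrt (μ / 3) * iteratedDeriv 2 f t
          + 1 / Real.sqrt (μ / 3) * (1 + ε / 2 * f t) * f t
          - 1 / Real.sqrt (μ / 3) * v t 0) * Real.exp (-x / Real.sqrt (μ / 3)))
    (hcomp1 : ζ 0 0 = f 0)
    (hcomp2 : deriv (fun y => q 0 y) 0 = -deriv f 0) :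
    ∀ t ∈ Icc (0 : ℝ) T, ζ t 0 = f t :=
  stmt_10_general ε μ T hε hμ f hf ζ q hζ hq hpos hfpos v v1 v2 hv2 hveq mass mom hcomp1 hcomp2
end

section
/- Let ε, μ > 0, c ∈ ℝ, and let Z : ℝ → ℝ be a C³ function with 1 + εZ > 0 everywhere, such that Z(x) → 0 and Z″(x) → 0 as x → +∞, and such that the pair ζ(t,x) := Z(x − c t), q(t,x) := c Z(x − c t) satisfies the momentum equation of the dimensionless Abbott–Boussinesq system, ∂_t q − (μ/3) ∂_x² ∂_t q + ∂_x( (1/(2ε)) h² + ε q²/h ) = 0 with h = 1 + εζ, at every (t,x) ∈ ℝ². Then for every x ∈ ℝ, −c² Z(x)/(1 + ε Z(x)) + Z(x) + (ε/2) Z(x)² + (c² μ/3) Z″(x) = 0. -/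
/-!
On the travelling wave `q = cζ`, `∂ₜ = -c ∂ₓ`, so at `t = 0` the momentum equation says that
`H = -c² Z + (c²μ/3) Z″ + h²/(2ε) + ε q²/h` has vanishing derivative. Hence `H` is constant, and
its limit at `+∞`, where `Z, Z″ → 0`, is `1/(2ε)`. The profile equation is `H - 1/(2ε) = 0`
after simplifying the rational expression.
-/

open Filter Topology

theorem eq_of_hasDerivAt_zero_of_tendsto_atTop {E : Type*} [NormedAddCommGroup E]
    [NormedSpace ℝ E] {f : ℝ → E} {L : E} (hf : ∀ x, HasDerivAt f 0 x)
    (hL : Tendsto f atTop (𝓝 L)) (x : ℝ) : f x = L := by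
  have hconst : f = fun _ => f x := funext fun y =>
    is_const_of_deriv_eq_zero (fun z => (hf z).differentiableAt) (fun z => (hf z).deriv) y x
  rw [hconst] at hL
  exact tendsto_nhds_unique tendsto_const_nhds hL

theorem deriv_comp_const_sub_mul {𝕜 E : Type*} [NontriviallyNormedField 𝕜]
    [NormedAddCommGroup E] [NormedSpace 𝕜 E] (f : 𝕜 → E) (a c t : 𝕜) :
    deriv (fun s => f (a - c * s)) t = -(c • deriv f (a - c * t)) := by
  rw [deriv_comp_mul_left c (fun u => f (a - u)) t, deriv_comp_const_sub, smul_neg]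

theorem deriv_travellingWave (Z : ℝ → ℝ) (c x t : ℝ) :
    deriv (fun s => c * Z (x - c * s)) t = -c ^ 2 * deriv Z (x - c * t) := by
  rw [deriv_const_mul_field, deriv_comp_const_sub_mul, smul_eq_mul]
  ring

theorem iteratedDeriv_two_deriv_travellingWave (Z : ℝ → ℝ) (c x : ℝ) :
    iteratedDeriv 2 (fun y => deriv (fun s => c * Z (y - c * s)) 0) x
      = -c ^ 2 * iteratedDeriv 3 Z x := by
  simp_rw [deriv_travellingWave, mul_zero, sub_zero]
  rw [iteratedDeriv_const_mul_field, ← iteratedDeriv_succ']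

/-- The flux `h²/(2ε) + ε q²/h` of the momentum equation at `ζ = z`, `q = c z`. -/
noncomputable def abFlux (ε c z : ℝ) : ℝ :=
  1 / (2 * ε) * (1 + ε * z) ^ 2 + ε * (c * z) ^ 2 / (1 + ε * z)

theorem abFlux_zero (ε c : ℝ) : abFlux ε c 0 = 1 / (2 * ε) := by
  simp [abFlux]

theorem differentiableAt_abFlux {ε c z : ℝ} (hz : 1 + ε * z ≠ 0) :
    DifferentiableAt ℝ (abFlux ε c) z := by
  unfold abFlux
  fun_prop (disch := exact hz)

theorem neg_sq_mul_add_abFlux {ε c z : ℝ} (hε : ε ≠ 0) (hz : 1 + ε * z ≠ 0) :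
    -c ^ 2 * z + abFlux ε c z = -c ^ 2 * z / (1 + ε * z) + z + ε / 2 * z ^ 2 + 1 / (2 * ε) := by
  have hcross : -c ^ 2 * z + ε * (c * z) ^ 2 / (1 + ε * z) = -c ^ 2 * z / (1 + ε * z) := by
    rw [eq_div_iff hz, add_mul, div_mul_cancel₀ _ hz]
    ring
  have hsquare : 1 / (2 * ε) * (1 + ε * z) ^ 2 = z + ε / 2 * z ^ 2 + 1 / (2 * ε) := by
    field_simp
    ring
  unfold abFlux
  linear_combination hcross + hsquare

noncomputable def abFirstIntegral (ε μ c : ℝ) (Z : ℝ → ℝ) (x : ℝ) : ℝ :=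
  -c ^ 2 * Z x + c ^ 2 * μ / 3 * iteratedDeriv 2 Z x + abFlux ε c (Z x)

theorem hasDerivAt_abFirstIntegral {ε μ c x : ℝ} {Z : ℝ → ℝ} (hZ : ContDiff ℝ 3 Z)
    (hx : 1 + ε * Z x ≠ 0) :
    HasDerivAt (abFirstIntegral ε μ c Z)
      (-c ^ 2 * deriv Z x + c ^ 2 * μ / 3 * iteratedDeriv 3 Z x
        + deriv (fun y => abFlux ε c (Z y)) x) x := by
  have hZx : DifferentiableAt ℝ Z x := hZ.differentiable (by norm_num) x
  have hZ'' : HasDerivAt (iteratedDeriv 2 Z) (iteratedDeriv 3 Z x) x := by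
    rw [iteratedDeriv_succ (n := 2)]
    exact ((hZ.differentiable_iteratedDeriv 2 (by norm_num)) x).hasDerivAt
  have hflux : DifferentiableAt ℝ (fun y => abFlux ε c (Z y)) x :=
    (differentiableAt_abFlux hx).comp x hZx
  exact ((hZx.hasDerivAt.const_mul _).add (hZ''.const_mul _)).add hflux.hasDerivAt

theorem tendsto_abFirstIntegral {ε μ c : ℝ} {Z : ℝ → ℝ} (hZ0 : Tendsto Z atTop (𝓝 0))
    (hZ''0 : Tendsto (iteratedDeriv 2 Z) atTop (𝓝 0)) :
    Tendsto (abFirstIntegral ε μ c Z) atTop (𝓝 (1 / (2 * ε))) := by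
  have hflux : ContinuousAt (abFlux ε c) 0 :=
    (differentiableAt_abFlux (by simp)).continuousAt
  have hlim := ((hZ0.const_mul (-c ^ 2)).add (hZ''0.const_mul (c ^ 2 * μ / 3))).add
    (hflux.tendsto.comp hZ0)
  unfold abFirstIntegral
  simpa [abFlux_zero] using hlim

theorem stmt_11_general (ε μ c : ℝ) (hε : 0 < ε)
    (Z : ℝ → ℝ) (hZ : ContDiff ℝ 3 Z)
    (hpos : ∀ x, 0 < 1 + ε * Z x)
    (hZ0 : Tendsto Z atTop (nhds 0))
    (hZ''0 : Tendsto (iteratedDeriv 2 Z) atTop (nhds 0))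
    (mom : ∀ t x : ℝ,
      deriv (fun s => c * Z (x - c * s)) t
        - μ / 3 * iteratedDeriv 2 (fun y => deriv (fun s => c * Z (y - c * s)) t) x
        + deriv (fun y =>
            1 / (2 * ε) * (1 + ε * Z (y - c * t)) ^ 2
              + ε * (c * Z (y - c * t)) ^ 2 / (1 + ε * Z (y - c * t))) x = 0) :
    ∀ x : ℝ,
      -c ^ 2 * Z x / (1 + ε * Z x) + Z x + ε / 2 * (Z x) ^ 2
        + c ^ 2 * μ / 3 * iteratedDeriv 2 Z x = 0 := by
  have hconserved : ∀ x, HasDerivAt (abFirstIntegral ε μ c Z) 0 x := by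
    intro x
    convert hasDerivAt_abFirstIntegral (μ := μ) (c := c) hZ (hpos x).ne' using 1
    have hmom := mom 0 x
    rw [iteratedDeriv_two_deriv_travellingWave, deriv_travellingWave] at hmom
    simp only [mul_zero, sub_zero] at hmom
    unfold abFlux
    linear_combination -hmom
  intro x
  have hx := eq_of_hasDerivAt_zero_of_tendsto_atTop hconserved
    (tendsto_abFirstIntegral hZ0 hZ''0) x
  unfold abFirstIntegral at hx
  linear_combination hx - neg_sq_mul_add_abFlux (c := c) hε.ne' (hpos x).ne'

/-- If `ζ(t,x) = Z(x−ct)`, `q(t,x) = cZ(x−ct)` is a solitary-wave solution of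
the momentum equation of the dimensionless Abbott–Boussinesq system, with `Z`
and `Z″` decaying at `+∞`, then the profile `Z` satisfies the second-order ODE
`−c²Z/(1+εZ) + Z + (ε/2)Z² + (c²μ/3)Z″ = 0`. -/
theorem stmt_11 (ε μ c : ℝ) (hε : 0 < ε) (hμ : 0 < μ)
    (Z : ℝ → ℝ) (hZ : ContDiff ℝ 3 Z)
    (hpos : ∀ x, 0 < 1 + ε * Z x)
    (hZ0 : Tendsto Z atTop (nhds 0))
    (hZ''0 : Tendsto (iteratedDeriv 2 Z) atTop (nhds 0))
    (mom : ∀ t x : ℝ,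
      deriv (fun s => c * Z (x - c * s)) t
        - μ / 3 * iteratedDeriv 2 (fun y => deriv (fun s => c * Z (y - c * s)) t) x
        + deriv (fun y =>
            1 / (2 * ε) * (1 + ε * Z (y - c * t)) ^ 2
              + ε * (c * Z (y - c * t)) ^ 2 / (1 + ε * Z (y - c * t))) x = 0) :
    ∀ x : ℝ,
      -c ^ 2 * Z x / (1 + ε * Z x) + Z x + ε / 2 * (Z x) ^ 2
        + c ^ 2 * μ / 3 * iteratedDeriv 2 Z x = 0 :=
  stmt_11_general ε μ c hε Z hZ hpos hZ0 hZ''0 mom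
end
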